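/- arXiv:1306.5905 — 2 statements merged into one kernel-verified Lean document; each statement's English description precedes it below -/
import Mathlib

section
/- Let θ ∈ (-1,1), k ≥ 2, 1 ≤ q ≤ k-1 be integers, and f_θ(h) = arctanh(θ·tanh h). If |θ| ≤ 1/√(qk), then the only real solution of the system h₁ = q·f_θ(h₂), h₂ = k·f_θ(h₁) is (h₁,h₂) = (0,0). -/
/-- The real inverse hyperbolic tangent, `arctanh x = (1/2) ln((1+x)/(1-x))`. -/
noncomputable def arctanh (x : ℝ) : ℝ := (1 / 2) * Real.log ((1 + x) / (1 - x))

/-- The Ising compatibility function `f_θ(h) = arctanh(θ · tanh h)`. -/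
noncomputable def fIsing (θ h : ℝ) : ℝ := arctanh (θ * Real.tanh h)

/-!
Writing `f_θ(h) = artanh (θ · tanh h)`, the power series `artanh y = ∑ y ^ (2n+1) / (2n+1)`
shows `|artanh (θ y)| < |θ| |artanh y|` for `0 < |θ|, |y| < 1`, so `|f_θ(h)| < |θ| |h|` for
`θ, h ≠ 0`. A nonzero solution would then satisfy `|h₁| < q k θ² |h₁| ≤ |h₁|`.
-/

open Real

lemma arctanh_eq_artanh {x : ℝ} (hx : x ∈ Set.Icc (-1) 1) : arctanh x = artanh x :=
  (artanh_eq_half_log hx).symm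

lemma fIsing_zero_left (h : ℝ) : fIsing 0 h = 0 := by simp [fIsing, arctanh]

lemma fIsing_zero_right (θ : ℝ) : fIsing θ 0 = 0 := by simp [fIsing, arctanh]

lemma artanh_neg_eq_neg_artanh (x : ℝ) : artanh (-x) = -artanh x := by
  have hinv : (1 + -x) / (1 - -x) = ((1 + x) / (1 - x))⁻¹ := by rw [inv_div]; ring
  rw [artanh, artanh, hinv, sqrt_inv, log_inv]

lemma abs_artanh (x : ℝ) : |artanh x| = artanh |x| := by
  rcases le_total 0 x with hx | hx
  · rw [abs_of_nonneg hx, abs_of_nonneg (artanh_nonneg hx)]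
  · rw [abs_of_nonpos hx, abs_of_nonpos (artanh_nonpos hx), artanh_neg_eq_neg_artanh]

lemma artanh_mul_lt_mul_artanh {θ y : ℝ} (hθ : θ ∈ Set.Ioo 0 1) (hy : y ∈ Set.Ioo 0 1) :
    artanh (θ * y) < θ * artanh y := by
  obtain ⟨hθ0, hθ1⟩ := hθ
  obtain ⟨hy0, hy1⟩ := hy
  have hy' : |y| < 1 := by rwa [abs_of_pos hy0]
  have hθy : |θ * y| < 1 := by rw [abs_of_pos (mul_pos hθ0 hy0)]; nlinarith
  have half_log {x : ℝ} (hx : |x| < 1) : artanh x = 1 / 2 * (log (1 + x) - log (1 - x)) := by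
    obtain ⟨h₁, h₂⟩ := abs_lt.1 hx
    rw [artanh_eq_half_log ⟨h₁.le, h₂.le⟩, log_div (by linarith) (by linarith)]
  set c : ℕ → ℝ := fun n ↦ 2 * (1 / (2 * n + 1))
  have hterm (n : ℕ) :
      c n * (θ * y) ^ (2 * n + 1) = θ ^ (2 * n) * (θ * (c n * y ^ (2 * n + 1))) := by ring
  have hpos (n : ℕ) : 0 < θ * (c n * y ^ (2 * n + 1)) := by positivity
  have hlt := hasSum_lt (i := 1)
    (fun n ↦ (hterm n).trans_le (mul_le_of_le_one_left (hpos n).le (pow_le_one₀ hθ0.le hθ1.le)))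
    ((hterm 1).trans_lt (mul_lt_of_lt_one_left (hpos 1) (pow_lt_one₀ hθ0.le hθ1 (by norm_num))))
    (hasSum_log_sub_log_of_abs_lt_one hθy) ((hasSum_log_sub_log_of_abs_lt_one hy').mul_left θ)
  rw [half_log hθy, half_log hy']
  linarith

lemma abs_artanh_mul_lt {θ y : ℝ} (hθ : |θ| < 1) (hθ0 : θ ≠ 0) (hy : |y| < 1) (hy0 : y ≠ 0) :
    |artanh (θ * y)| < |θ| * |artanh y| := by
  rw [abs_artanh, abs_artanh, abs_mul]
  exact artanh_mul_lt_mul_artanh ⟨abs_pos.2 hθ0, hθ⟩ ⟨abs_pos.2 hy0, hy⟩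

lemma tanh_ne_zero {x : ℝ} (hx : x ≠ 0) : tanh x ≠ 0 :=
  fun h ↦ hx (by rw [← artanh_tanh x, h, artanh_zero])

lemma abs_fIsing_lt {θ x : ℝ} (hθ : |θ| < 1) (hθ0 : θ ≠ 0) (hx : x ≠ 0) :
    |fIsing θ x| < |θ| * |x| := by
  have hmem : θ * tanh x ∈ Set.Icc (-1) 1 := by
    rw [Set.mem_Icc, ← abs_le, abs_mul]
    exact mul_le_one₀ hθ.le (abs_nonneg _) (abs_tanh_lt_one x).le
  calc |fIsing θ x| = |artanh (θ * tanh x)| := by rw [fIsing, arctanh_eq_artanh hmem]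
    _ < |θ| * |artanh (tanh x)| := abs_artanh_mul_lt hθ hθ0 (abs_tanh_lt_one x) (tanh_ne_zero hx)
    _ = |θ| * |x| := by rw [artanh_tanh]

lemma sq_mul_le_one_of_abs_le_one_div_sqrt {θ a : ℝ} (ha : 0 ≤ a) (h : |θ| ≤ 1 / √a) :
    θ ^ 2 * a ≤ 1 := by
  have hle : |θ| * √a ≤ 1 :=
    calc |θ| * √a ≤ 1 / √a * √a := mul_le_mul_of_nonneg_right h (sqrt_nonneg a)
      _ ≤ 1 := by rcases eq_or_ne √a 0 with h0 | h0 <;> simp [h0]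
  calc θ ^ 2 * a = (|θ| * √a) ^ 2 := by rw [mul_pow, sq_abs, sq_sqrt ha]
    _ ≤ 1 := pow_le_one₀ (by positivity) hle

theorem alt_unique_solution_general (θ : ℝ) (hθ : θ ∈ Set.Ioo (-1 : ℝ) 1)
    (k q : ℕ)
    (hθc : |θ| ≤ 1 / Real.sqrt (q * k))
    (h₁ h₂ : ℝ)
    (e1 : h₁ = q * fIsing θ h₂) (e2 : h₂ = k * fIsing θ h₁) :
    h₁ = 0 ∧ h₂ = 0 := by
  suffices hz : h₁ = 0 from ⟨hz, by rw [e2, hz, fIsing_zero_right, mul_zero]⟩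
  by_contra hz
  have hθ0 : θ ≠ 0 := by rintro rfl; exact hz (by rw [e1, fIsing_zero_left, mul_zero])
  have h₂0 : h₂ ≠ 0 := by rintro rfl; exact hz (by rw [e1, fIsing_zero_right, mul_zero])
  have hq : q ≠ 0 := by rintro rfl; exact hz (by rw [e1, Nat.cast_zero, zero_mul])
  have hθ1 : |θ| < 1 := abs_lt.2 hθ
  have bound₁ : |h₁| < q * (|θ| * |h₂|) := by
    rw [e1, abs_mul, Nat.abs_cast]
    exact mul_lt_mul_of_pos_left (abs_fIsing_lt hθ1 hθ0 h₂0) (by positivity)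
  have bound₂ : |h₂| ≤ k * (|θ| * |h₁|) := by
    rw [e2, abs_mul, Nat.abs_cast]
    exact mul_le_mul_of_nonneg_left (abs_fIsing_lt hθ1 hθ0 hz).le k.cast_nonneg
  have hcoef : θ ^ 2 * (q * k) ≤ 1 := sq_mul_le_one_of_abs_le_one_div_sqrt (by positivity) hθc
  have : |h₁| < |h₁| :=
    calc |h₁| < q * (|θ| * |h₂|) := bound₁
      _ ≤ q * (|θ| * (k * (|θ| * |h₁|))) := by gcongr
      _ = θ ^ 2 * (q * k) * |h₁| := by rw [← sq_abs θ]; ring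
      _ ≤ |h₁| := mul_le_of_le_one_left (abs_nonneg _) hcoef
  exact lt_irrefl _ this

/-- If `|θ| ≤ 1/√(qk)`, the only solution of `h₁ = q f_θ(h₂)`, `h₂ = k f_θ(h₁)` is `(0,0)`. -/
theorem alt_unique_solution (θ : ℝ) (hθ : θ ∈ Set.Ioo (-1 : ℝ) 1)
    (k q : ℕ) (hk : 2 ≤ k) (hq1 : 1 ≤ q) (hqk : q ≤ k - 1)
    (hθc : |θ| ≤ 1 / Real.sqrt (q * k))
    (h₁ h₂ : ℝ)
    (e1 : h₁ = q * fIsing θ h₂) (e2 : h₂ = k * fIsing θ h₁) :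
    h₁ = 0 ∧ h₂ = 0 :=
  alt_unique_solution_general θ hθ k q hθc h₁ h₂ e1 e2
end

section
/- For θ = tanh(βJ) with βJ > 0 and k ≥ 2, if kθ² > 1 then every solution of the system h = k·f_θ(h'), h' = k·f_θ(h) (with f_θ(t) = arctanh(θ·tanh t)) satisfies h = h'. -/
lemma tanh_eq' (x : ℝ) : Real.tanh x = 1 - 2 / (Real.exp (2 * x) + 1) := by
  have h1 : Real.exp (2 * x) = Real.exp x * Real.exp x := by
    rw [two_mul, Real.exp_add]
  have h2 : Real.exp x * Real.exp (-x) = 1 := by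
    rw [← Real.exp_add]; simp
  have hp := Real.exp_pos x
  have hp2 := Real.exp_pos (-x)
  rw [Real.tanh_eq_sinh_div_cosh, Real.sinh_eq, Real.cosh_eq, h1]
  have hden : Real.exp x + Real.exp (-x) > 0 := by positivity
  field_simp
  nlinarith [h2]

lemma tanh_strictMono : StrictMono Real.tanh := by
  intro a b hab
  rw [tanh_eq' a, tanh_eq' b]
  have h1 : Real.exp (2 * a) < Real.exp (2 * b) := Real.exp_lt_exp.2 (by linarith)
  have h2 : 0 < Real.exp (2 * a) + 1 := by positivity
  have h3 : 0 < Real.exp (2 * b) + 1 := by positivity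
  have : 2 / (Real.exp (2 * b) + 1) < 2 / (Real.exp (2 * a) + 1) := by
    apply div_lt_div_of_pos_left (by norm_num) h2 (by linarith)
  linarith

lemma tanh_lt_one (x : ℝ) : Real.tanh x < 1 := by
  rw [tanh_eq' x]
  have : 0 < 2 / (Real.exp (2 * x) + 1) := by positivity
  linarith

lemma neg_one_lt_tanh (x : ℝ) : -1 < Real.tanh x := by
  have := tanh_lt_one (-x)
  rw [Real.tanh_neg] at this
  linarith

lemma arctanh_strictMonoOn : ∀ a b : ℝ, -1 < a → b < 1 → a < b → arctanh a < arctanh b := by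
  intro a b ha hb hab
  unfold arctanh
  have h1a : 0 < 1 + a := by linarith
  have h1b : 0 < 1 - b := by linarith
  have hfa : 0 < (1 + a) / (1 - a) := by
    apply div_pos h1a; linarith
  have hlt : (1 + a) / (1 - a) < (1 + b) / (1 - b) := by
    rw [div_lt_div_iff₀ (by linarith) h1b]
    nlinarith
  have := Real.log_lt_log hfa hlt
  linarith

lemma fIsing_strictMono {θ : ℝ} (hθ0 : 0 < θ) (hθ1 : θ < 1) : StrictMono (fIsing θ) := by
  intro a b hab
  unfold fIsing
  apply arctanh_strictMonoOn
  · have := neg_one_lt_tanh a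
    nlinarith
  · have := tanh_lt_one b
    nlinarith
  · exact mul_lt_mul_of_pos_left (tanh_strictMono hab) hθ0

/-- In the ferromagnetic case (`J > 0`, so `θ = tanh(βJ) > 0`), every solution of the
zero-field periodic system `h = k f_θ(h')`, `h' = k f_θ(h)` is translation invariant. -/
theorem periodic_solutions_symmetric (β J : ℝ) (hβ : 0 < β) (hJ : 0 < J)
    (k : ℕ) (hk : 2 ≤ k)
    (hcrit : 1 < (k : ℝ) * Real.tanh (β * J) ^ 2)
    (h h' : ℝ)
    (e1 : h = k * fIsing (Real.tanh (β * J)) h')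
    (e2 : h' = k * fIsing (Real.tanh (β * J)) h) :
    h = h' := by
  set θ := Real.tanh (β * J) with hθ
  have hθ0 : 0 < θ := by
    have : Real.tanh 0 < Real.tanh (β * J) := tanh_strictMono (by positivity)
    simpa using this
  have hθ1 : θ < 1 := tanh_lt_one _
  have hkpos : (0 : ℝ) < k := by positivity
  have hmono := fIsing_strictMono hθ0 hθ1
  rcases lt_trichotomy h h' with hlt | heq | hgt
  · have : (k : ℝ) * fIsing θ h < k * fIsing θ h' :=
      mul_lt_mul_of_pos_left (hmono hlt) hkpos
    rw [← e2, ← e1] at this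
    linarith
  · exact heq
  · have : (k : ℝ) * fIsing θ h' < k * fIsing θ h :=
      mul_lt_mul_of_pos_left (hmono hgt) hkpos
    rw [← e2, ← e1] at this
    linarith
end
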